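/- For all 0 ≤ t₁ ≤ t₂ ≤ T one has g(t₂) ≤ g(t₁) (g is decreasing, so max_{0≤t≤T} g(t) = g(0)); moreover 0 ≤ g(t) ≤ ǧ₂ − ϑ for every t ∈ [0,T], and consequently g₁(t) = γ₁ g(t) − γ₂ ≤ −γ₁ϑ < 0 for every t ∈ [0,T]. -/

import Mathlib

/-!
With `a = ǧ₂` and `c = ω = 2ϑγ₁ ≥ 0`, `g(t) = (a - ϑ) - 2ϑ(a - ϑ)/D(t)` where
`D(t) = e^{c(T-t)}(a + ϑ) - a + ϑ` is decreasing in `t` and `D(t) ≥ D(T) = 2ϑ > 0` for `t ≤ T`.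
So `2ϑ(a - ϑ)/D(t)` increases in `t` and stays in `[0, a - ϑ]`, which gives monotonicity and
`0 ≤ g ≤ a - ϑ` as soon as `0 < ϑ ≤ a`. The latter comes from `ǧ₃ ≥ 0` and the discriminant
`ǧ₂² - ǧ₃ = (1-γ)(γ(κ+r)(κ-r) + (1-γ)κ²)/σ⁴`, positive because `|r| ≤ κ`.
Finally `γ₁ǧ₂ = γ₂` turns `g ≤ ǧ₂ - ϑ` into `g₁ ≤ -γ₁ϑ`.
-/

open Real MeasureTheory Set Filter

noncomputable section

/-- `γ₁ = σ²/(1-γ)`. -/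
def gam1 (σ γ : ℝ) : ℝ := σ ^ 2 / (1 - γ)

/-- `γ₂ = γκ₁/(1-γ) + κ` with `κ₁ = κ + r`. -/
def gam2 (κ σ r γ : ℝ) : ℝ := γ * (κ + r) / (1 - γ) + κ

/-- `γ₃ = γκ₁²/((1-γ)σ²)`. -/
def gam3 (κ σ r γ : ℝ) : ℝ := γ * (κ + r) ^ 2 / ((1 - γ) * σ ^ 2)

/-- `ǧ₂ = γ₂/γ₁`. -/
def gc2 (κ σ r γ : ℝ) : ℝ := gam2 κ σ r γ / gam1 σ γ

/-- `ǧ₃ = γ₃/γ₁`. -/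
def gc3 (κ σ r γ : ℝ) : ℝ := gam3 κ σ r γ / gam1 σ γ

/-- `ϑ = √(ǧ₂² − ǧ₃)`. -/
def theta (κ σ r γ : ℝ) : ℝ := Real.sqrt (gc2 κ σ r γ ^ 2 - gc3 κ σ r γ)

/-- The explicit solution `g(t)` of the Riccati equation; `ω = 2ϑγ₁`. -/
def gfun (κ σ r γ T t : ℝ) : ℝ :=
  gc2 κ σ r γ - theta κ σ r γ -
    2 * theta κ σ r γ * (gc2 κ σ r γ - theta κ σ r γ) /
      (Real.exp (2 * theta κ σ r γ * gam1 σ γ * (T - t)) * (gc2 κ σ r γ + theta κ σ r γ) -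
        gc2 κ σ r γ + theta κ σ r γ)

/-- `g₁(t) = γ₁ g(t) − γ₂`. -/
def g1fun (κ σ r γ T t : ℝ) : ℝ := gam1 σ γ * gfun κ σ r γ T t - gam2 κ σ r γ

/-- `μ(u,t) = exp(∫_t^u g₁(v) dv)`. -/
def mufun (κ σ r γ T u t : ℝ) : ℝ := Real.exp (∫ v in t..u, g1fun κ σ r γ T v)

/-- `σ₁(u,t) = √(σ² ∫_t^u μ(u,z)² dz)`. -/
def sig1fun (κ σ r γ T u t : ℝ) : ℝ :=
  Real.sqrt (σ ^ 2 * ∫ z in t..u, mufun κ σ r γ T u z ^ 2)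

/-- The Gaussian kernel `φ(s,t,z,u)`. -/
def phifun (κ σ r γ T s t z u : ℝ) : ℝ :=
  (Real.sqrt (2 * Real.pi) * sig1fun κ σ r γ T u t)⁻¹ *
    Real.exp (-(z - s * mufun κ σ r γ T u t) ^ 2 / (2 * sig1fun κ σ r γ T u t ^ 2))

/-- `G(s,t,y) = exp(−(s²g(t)/2 + y)/(1−γ))`. -/
def Gfun (κ σ r γ T s t y : ℝ) : ℝ :=
  Real.exp (-(s ^ 2 * gfun κ σ r γ T t / 2 + y) / (1 - γ))

/-- `Γ₀(s,t,y₁,y₂)`. -/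
def Gamma0 (κ σ r γ ϖ T s t y₁ y₂ : ℝ) : ℝ :=
  σ ^ 2 * y₂ ^ 2 / (2 * (1 - γ)) + σ ^ 2 * gfun κ σ r γ T t / 2 + r * γ +
    (1 - γ) * ϖ ^ (1 / (γ - 1)) * Gfun κ σ r γ T s t y₁

/-- `Ψ_h(s,t) = Γ₀(s,t,h(s,t),∂_s h(s,t))`. -/
def Psifun (κ σ r γ ϖ T : ℝ) (h : ℝ → ℝ → ℝ) (s t : ℝ) : ℝ :=
  Gamma0 κ σ r γ ϖ T s t (h s t) (deriv (fun s' => h s' t) s)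

/-- The Feynman–Kac mapping `ℒ_h(s,t) = ∫_t^T ∫_ℝ Ψ_h(z,u) φ(s,t,z,u) dz du`. -/
def FK (κ σ r γ ϖ T : ℝ) (h : ℝ → ℝ → ℝ) (s t : ℝ) : ℝ :=
  ∫ u in t..T, ∫ z : ℝ, Psifun κ σ r γ ϖ T h z u * phifun κ σ r γ T s t z u

/-- The bound `B₁`. -/
def Bb1 (σ γ ϖ T : ℝ) : ℝ :=
  (1 - γ) / σ ^ 2 *
    (Real.sqrt (Real.pi / (2 * T)) +
      Real.sqrt (|Real.pi - 4 * T * σ ^ 2 * ϖ ^ (1 / (γ - 1))| / (2 * T)))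

/-- The bound `B₀`. -/
def Bb0 (κ σ r γ ϖ T : ℝ) : ℝ :=
  (gfun κ σ r γ T 0 * σ ^ 2 / 2 + r * γ + (1 - γ) * ϖ ^ (1 / (γ - 1)) +
    gam1 σ γ / 2 * Bb1 σ γ ϖ T ^ 2) * T

/-- Membership in the space `𝒳`. -/
def MemX (κ σ r γ ϖ T : ℝ) (h : ℝ → ℝ → ℝ) : Prop :=
  ContinuousOn (fun p : ℝ × ℝ => h p.1 p.2) (Set.univ ×ˢ Set.Icc 0 T) ∧
  (∀ t ∈ Set.Icc (0 : ℝ) T, ∀ s : ℝ, DifferentiableAt ℝ (fun s' => h s' t) s) ∧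
  ContinuousOn (fun p : ℝ × ℝ => deriv (fun s' => h s' p.2) p.1) (Set.univ ×ˢ Set.Icc 0 T) ∧
  ∀ s : ℝ, ∀ t ∈ Set.Icc (0 : ℝ) T,
    0 ≤ h s t ∧ h s t ≤ Bb0 κ σ r γ ϖ T ∧ |deriv (fun s' => h s' t) s| ≤ Bb1 σ γ ϖ T

/-- The metric `ρ_κ̂` on `𝒳`. -/
def rhoX (T kh : ℝ) (f h : ℝ → ℝ → ℝ) : ℝ :=
  ⨆ p : ℝ × Set.Icc (0 : ℝ) T,
    Real.exp (-kh * (T - (p.2 : ℝ))) *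
      (|h p.1 (p.2 : ℝ) - f p.1 (p.2 : ℝ)| +
        |deriv (fun s' => h s' (p.2 : ℝ)) p.1 - deriv (fun s' => f s' (p.2 : ℝ)) p.1|)

/-- The Picard iterates `h₀ = 0`, `h_{n+1} = ℒ_{h_n}`. -/
def picard (κ σ r γ ϖ T : ℝ) : ℕ → ℝ → ℝ → ℝ
  | 0 => fun _ _ => 0
  | n + 1 => FK κ σ r γ ϖ T (picard κ σ r γ ϖ T n)

section Riccati

variable {a θ c T t : ℝ}

def riccatiDenom (a θ c T t : ℝ) : ℝ := exp (c * (T - t)) * (a + θ) - a + θ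

def riccatiSolution (a θ c T t : ℝ) : ℝ := a - θ - 2 * θ * (a - θ) / riccatiDenom a θ c T t

lemma two_mul_le_riccatiDenom (hθ : 0 ≤ a + θ) (hc : 0 ≤ c) (ht : t ≤ T) :
    2 * θ ≤ riccatiDenom a θ c T t := by
  have hexp : 1 ≤ exp (c * (T - t)) := one_le_exp (mul_nonneg hc (sub_nonneg.2 ht))
  unfold riccatiDenom
  nlinarith

lemma riccatiDenom_antitone (hθ : 0 ≤ a + θ) (hc : 0 ≤ c) :
    Antitone (riccatiDenom a θ c T) := by
  intro t₁ t₂ h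
  have hexp : exp (c * (T - t₂)) ≤ exp (c * (T - t₁)) :=
    exp_le_exp.2 (mul_le_mul_of_nonneg_left (by linarith) hc)
  unfold riccatiDenom
  nlinarith

variable (hθ : 0 < θ) (hθa : θ ≤ a) (hc : 0 ≤ c)
include hθ hθa hc

lemma riccatiDenom_pos (ht : t ≤ T) : 0 < riccatiDenom a θ c T t := by
  linarith [two_mul_le_riccatiDenom (by linarith : 0 ≤ a + θ) hc ht]

lemma riccatiSolution_le (ht : t ≤ T) : riccatiSolution a θ c T t ≤ a - θ := by
  have : 0 ≤ 2 * θ * (a - θ) / riccatiDenom a θ c T t :=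
    div_nonneg (by nlinarith) (riccatiDenom_pos hθ hθa hc ht).le
  unfold riccatiSolution
  linarith

lemma riccatiSolution_nonneg (ht : t ≤ T) : 0 ≤ riccatiSolution a θ c T t := by
  have hD := two_mul_le_riccatiDenom (by linarith : 0 ≤ a + θ) hc ht
  unfold riccatiSolution
  rw [sub_nonneg, div_le_iff₀ (riccatiDenom_pos hθ hθa hc ht)]
  nlinarith

lemma riccatiSolution_antitoneOn : AntitoneOn (riccatiSolution a θ c T) (Iic T) := by
  intro t₁ _ t₂ ht₂ h
  have hD : riccatiDenom a θ c T t₂ ≤ riccatiDenom a θ c T t₁ :=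
    riccatiDenom_antitone (by linarith) hc h
  have := div_le_div_of_nonneg_left (by nlinarith : 0 ≤ 2 * θ * (a - θ))
    (riccatiDenom_pos hθ hθa hc ht₂) hD
  unfold riccatiSolution
  linarith

end Riccati

section Coefficients

variable {κ σ r γ : ℝ}

lemma gam1_pos (hσ : σ ≠ 0) (hγ : γ < 1) : 0 < gam1 σ γ :=
  div_pos (by positivity) (by linarith)

lemma gam1_mul_gc2 (hσ : σ ≠ 0) (hγ : γ < 1) : gam1 σ γ * gc2 κ σ r γ = gam2 κ σ r γ :=
  mul_div_cancel₀ _ (gam1_pos hσ hγ).ne'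

lemma gc2_pos (hκ : 0 < κ) (hσ : σ ≠ 0) (hr : 0 ≤ r) (hγ0 : 0 ≤ γ) (hγ1 : γ < 1) :
    0 < gc2 κ σ r γ := by
  have : 0 < 1 - γ := by linarith
  exact div_pos (by unfold gam2; positivity) (gam1_pos hσ hγ1)

lemma gc3_nonneg (hγ0 : 0 ≤ γ) (hγ1 : γ ≤ 1) : 0 ≤ gc3 κ σ r γ := by
  have : 0 ≤ 1 - γ := by linarith
  unfold gc3 gam3 gam1
  positivity

lemma gc2_sq_sub_gc3_eq (hσ : σ ≠ 0) (hγ : γ ≠ 1) :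
    gc2 κ σ r γ ^ 2 - gc3 κ σ r γ =
      (1 - γ) * (γ * (κ + r) * (κ - r) + (1 - γ) * κ ^ 2) / σ ^ 4 := by
  have : 1 - γ ≠ 0 := sub_ne_zero.2 hγ.symm
  unfold gc2 gc3 gam1 gam2 gam3
  field_simp
  ring

lemma theta_pos (hκ : 0 < κ) (hσ : σ ≠ 0) (hr0 : 0 ≤ r) (hrκ : r ≤ κ)
    (hγ0 : 0 ≤ γ) (hγ1 : γ < 1) : 0 < theta κ σ r γ := by
  have h1γ : 0 < 1 - γ := by linarith
  have : 0 ≤ γ * (κ + r) * (κ - r) := by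
    apply mul_nonneg (mul_nonneg hγ0 _) <;> linarith
  refine sqrt_pos.2 ?_
  rw [gc2_sq_sub_gc3_eq hσ hγ1.ne]
  positivity

lemma theta_le_gc2 (hκ : 0 < κ) (hσ : σ ≠ 0) (hr : 0 ≤ r) (hγ0 : 0 ≤ γ) (hγ1 : γ < 1) :
    theta κ σ r γ ≤ gc2 κ σ r γ :=
  (sqrt_le_left (gc2_pos hκ hσ hr hγ0 hγ1).le).2 <|
    sub_le_self _ (gc3_nonneg hγ0 hγ1.le)

end Coefficients

theorem g_decreasing_and_bounds_general (κ σ r γ T : ℝ)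
    (hκ : 0 < κ) (hσ : 0 < σ) (hr0 : 0 ≤ r) (hrκ : r ≤ κ)
    (hγ0 : 0 < γ) (hγ1 : γ < 1) :
    (∀ t₁ t₂ : ℝ, 0 ≤ t₁ → t₁ ≤ t₂ → t₂ ≤ T →
      gfun κ σ r γ T t₂ ≤ gfun κ σ r γ T t₁) ∧
    (∀ t ∈ Set.Icc (0 : ℝ) T,
      0 ≤ gfun κ σ r γ T t ∧ gfun κ σ r γ T t ≤ gc2 κ σ r γ - theta κ σ r γ) ∧
    (∀ t ∈ Set.Icc (0 : ℝ) T,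
      g1fun κ σ r γ T t ≤ -(gam1 σ γ * theta κ σ r γ) ∧
        -(gam1 σ γ * theta κ σ r γ) < 0) := by
  have hγ₁ := gam1_pos hσ.ne' hγ1
  have hθ := theta_pos hκ hσ.ne' hr0 hrκ hγ0.le hγ1
  have hθa := theta_le_gc2 hκ hσ.ne' hr0 hγ0.le hγ1
  have hc : 0 ≤ 2 * theta κ σ r γ * gam1 σ γ := by positivity
  have hg : gfun κ σ r γ T =
      riccatiSolution (gc2 κ σ r γ) (theta κ σ r γ) (2 * theta κ σ r γ * gam1 σ γ) T := rfl
  have hle : ∀ t ∈ Icc (0 : ℝ) T, gfun κ σ r γ T t ≤ gc2 κ σ r γ - theta κ σ r γ :=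
    fun t ht => hg ▸ riccatiSolution_le hθ hθa hc ht.2
  refine ⟨fun t₁ t₂ _ h₁₂ h₂ => ?_, fun t ht => ⟨?_, hle t ht⟩, fun t ht => ⟨?_, ?_⟩⟩
  · exact hg ▸ riccatiSolution_antitoneOn hθ hθa hc (mem_Iic.2 (h₁₂.trans h₂)) h₂ h₁₂
  · exact hg ▸ riccatiSolution_nonneg hθ hθa hc ht.2
  · calc g1fun κ σ r γ T t
        ≤ gam1 σ γ * (gc2 κ σ r γ - theta κ σ r γ) - gam2 κ σ r γ :=
          sub_le_sub_right (mul_le_mul_of_nonneg_left (hle t ht) hγ₁.le) _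
      _ = -(gam1 σ γ * theta κ σ r γ) := by rw [mul_sub, gam1_mul_gc2 hσ.ne' hγ1]; ring
  · exact neg_neg_of_pos (mul_pos hγ₁ hθ)

/-- `g` is decreasing on `[0,T]`, satisfies `0 ≤ g(t) ≤ ǧ₂ − ϑ`, and
consequently `g₁(t) = γ₁ g(t) − γ₂ ≤ −γ₁ϑ < 0` on `[0,T]`. -/
theorem g_decreasing_and_bounds (κ σ r γ ϖ T : ℝ)
    (hκ : 0 < κ) (hσ : 0 < σ) (hr0 : 0 ≤ r) (hrκ : r ≤ κ)
    (hγ0 : 0 < γ) (hγ1 : γ < 1) (hϖ : 0 < ϖ) (hT : 0 < T) :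
    (∀ t₁ t₂ : ℝ, 0 ≤ t₁ → t₁ ≤ t₂ → t₂ ≤ T →
      gfun κ σ r γ T t₂ ≤ gfun κ σ r γ T t₁) ∧
    (∀ t ∈ Set.Icc (0 : ℝ) T,
      0 ≤ gfun κ σ r γ T t ∧ gfun κ σ r γ T t ≤ gc2 κ σ r γ - theta κ σ r γ) ∧
    (∀ t ∈ Set.Icc (0 : ℝ) T,
      g1fun κ σ r γ T t ≤ -(gam1 σ γ * theta κ σ r γ) ∧
        -(gam1 σ γ * theta κ σ r γ) < 0) :=
  g_decreasing_and_bounds_general κ σ r γ T hκ hσ hr0 hrκ hγ0 hγ1
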